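/- Let G be a graph of order n ≥ 3 with δ(G) ≥ (n−1)/2. Then G is hamiltonian unless n is odd and either G = H ∨ ((n+1)/2)·K₁ for some graph H of order (n−1)/2, or G = K₁ ∨ 2K_{(n−1)/2}. -/

import Mathlib

open scoped Classical

/-- An `(s,t)`-bipartite-hole: disjoint vertex sets of sizes `s` and `t` with no edge between. -/
def HasBipHole {V : Type*} (G : SimpleGraph V) (s t : ℕ) : Prop :=
  ∃ S T : Finset V, Disjoint S T ∧ S.card = s ∧ T.card = t ∧
    ∀ a ∈ S, ∀ b ∈ T, ¬ G.Adj a b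

/-- The bipartite-hole-number: least `k` admitting positive `s,t` with `s+t = k+1` and
no `(s,t)`-bipartite-hole. -/
noncomputable def bhn {V : Type*} (G : SimpleGraph V) : ℕ :=
  sInf {k | ∃ s t : ℕ, 0 < s ∧ 0 < t ∧ s + t = k + 1 ∧ ¬ HasBipHole G s t}

/-- The join `G ∨ K₁`: one new vertex adjacent to everything. -/
def joinK1 {V : Type*} (G : SimpleGraph V) : SimpleGraph (Option V) where
  Adj a b := match a, b with
    | some a, some b => G.Adj a b
    | some _, none => True
    | none, some _ => True
    | none, none => False
  symm := ⟨by
    rintro (_ | a) (_ | b) h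
    · exact h.elim
    · trivial
    · trivial
    · exact h.symm⟩
  loopless := ⟨by
    rintro (_ | a) h
    · exact h
    · exact G.irrefl h⟩

/-- Minimum degree sum over non-adjacent pairs of distinct vertices. -/
noncomputable def sigma2 {V : Type*} [Fintype V] (G : SimpleGraph V) : ℕ :=
  sInf {m | ∃ x y : V, x ≠ y ∧ ¬ G.Adj x y ∧ G.degree x + G.degree y = m}

/-- A graph is traceable if it has a Hamilton path. -/
def IsTraceable {V : Type*} (G : SimpleGraph V) : Prop :=
  ∃ (a b : V) (p : G.Walk a b), p.IsHamiltonian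

/-- `G` is 2-connected: at least 3 vertices and deleting any vertex leaves it connected. -/
def TwoConnected {V : Type*} [Fintype V] (G : SimpleGraph V) : Prop :=
  3 ≤ Fintype.card V ∧ ∀ v : V, (SimpleGraph.induce ({v}ᶜ : Set V) G).Connected

/-!
A longest path `v 0, …, v (k - 1)` is a Hamilton path: the degree condition forces a crossing
pair of chords `v 0 ~ v (i + 1)`, `v (k - 1) ~ v i`, hence a cycle on its vertices, and any
vertex off the cycle has a neighbour on it.

If `G` is not hamiltonian, no Hamilton path has a crossing pair, so counting the neighbours of
its ends gives `n = 2δ + 1` and, for every `i`, exactly one of `v 0 ~ v (i + 1)` and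
`v (n - 1) ~ v i`. Applied to the Pósa rotations of the path, this expresses the neighbourhood of
`v i`, for `i ∈ S = {i | v 0 ~ v (i + 1)}`, through `S` itself. The `δ` elements of `S` lie
below `2δ - 1`; if `S` has both a gap and two consecutive elements, then it contains a gap
followed by two consecutive elements, or two consecutive elements followed later by a gap and an
element, and either pattern yields a crossing pair on some Hamilton path. Hence
`S = {0, …, δ - 1}`, giving `K₁ ∨ 2K_δ` with centre `v δ`, or `S = {0, 2, …, 2δ - 2}`, giving
`H ∨ (δ + 1)K₁` with independent set `{v 0, v 2, …, v (2δ)}`.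
-/

open Finset

theorem Nat.add_two_le_or_exists_gap_pair {P : ℕ → Prop} {p q : ℕ} (hq : ¬ P q) (hp : P p)
    (hp₁ : P (p + 1)) : p + 2 ≤ q ∨ ∃ m, ¬ P m ∧ P (m + 1) ∧ P (m + 2) := by
  induction p with
  | zero =>
    have : q ≠ 0 := by rintro rfl; exact hq hp
    have : q ≠ 1 := by rintro rfl; exact hq hp₁
    omega
  | succ p ih =>
    by_cases hp' : P p
    · refine (ih hp' hp).imp (fun h => ?_) id
      have : q ≠ p + 2 := by rintro rfl; exact hq hp₁
      omega
    · exact Or.inr ⟨p, hp', hp, hp₁⟩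

namespace Finset

theorem eq_range_card_of_add_one_mem {S : Finset ℕ} (h : ∀ q, q + 1 ∈ S → q ∈ S) :
    S = range S.card := by
  have hdown : ∀ d m, m + d ∈ S → m ∈ S := by
    intro d
    induction d with
    | zero => exact fun m hm => hm
    | succ d ih => exact fun m hm => ih m (h _ hm)
  refine eq_of_subset_of_card_le (fun m hm => mem_range.mpr ?_) (card_range _).le
  have : range (m + 1) ⊆ S := fun t ht =>
    hdown (m - t) t (by rwa [Nat.add_sub_cancel' (Nat.lt_succ_iff.mp (mem_range.mp ht))])
  simpa using card_le_card this

theorem mem_image_two_mul_range {m r : ℕ} :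
    m ∈ (range r).image (2 * ·) ↔ Even m ∧ m < 2 * r := by
  simp only [mem_image, mem_range, Nat.even_iff]
  constructor
  · rintro ⟨t, ht, rfl⟩
    omega
  · exact fun h => ⟨m / 2, by omega, by omega⟩

theorem eq_image_two_mul_range_of_add_one_notMem {S : Finset ℕ}
    (hS : ∀ x ∈ S, x + 2 ≤ 2 * S.card) (h : ∀ x ∈ S, x + 1 ∉ S) :
    S = (range S.card).image (2 * ·) := by
  have hsurj := surj_on_of_inj_on_of_card_le (t := range S.card) (fun x _ => (x + 1) / 2)
    (fun x hx => mem_range.mpr (by have := hS x hx; omega))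
    (fun a b ha hb hab => by
      by_contra hne
      rcases (by omega : b = a + 1 ∨ a = b + 1) with rfl | rfl
      exacts [h a ha hb, h b hb ha])
    (card_range _).le
  have heven : ∀ t < S.card, 2 * t ∈ S := by
    intro t
    induction t with
    | zero =>
      intro ht
      obtain ⟨x, hx, hx0⟩ := hsurj 0 (mem_range.mpr ht)
      rwa [(by omega : x = 0)] at hx
    | succ t ih =>
      intro ht
      obtain ⟨x, hx, hxt⟩ := hsurj (t + 1) (mem_range.mpr ht)
      rcases (by omega : x = 2 * t + 1 ∨ x = 2 * (t + 1)) with rfl | rfl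
      exacts [absurd hx (h _ (ih (by omega))), hx]
  refine (eq_of_subset_of_card_le (fun x hx => ?_) ?_).symm
  · obtain ⟨t, ht, rfl⟩ := mem_image.mp hx
    exact heven t (mem_range.mp ht)
  · rw [card_image_of_injective _ (mul_right_injective₀ two_ne_zero), card_range]

end Finset

namespace SimpleGraph

variable {V : Type*} {G : SimpleGraph V}

-- Paths and cycles are listed by their vertices `v 0, …, v (k - 1)`, rather than as `Walk`s, so
-- that rotating and reversing them is reindexing; the values of `v` from `k` on are irrelevant.
structure IsPathOn (G : SimpleGraph V) (v : ℕ → V) (k : ℕ) : Prop where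
  injOn : Set.InjOn v (Set.Iio k)
  adj : ∀ i, i + 1 < k → G.Adj (v i) (v (i + 1))

structure IsCycleOn (G : SimpleGraph V) (v : ℕ → V) (k : ℕ) : Prop extends G.IsPathOn v k where
  adj_last : G.Adj (v (k - 1)) (v 0)

namespace IsPathOn

variable {v : ℕ → V} {k i j : ℕ}

theorem adj_of_add_one_eq (hv : G.IsPathOn v k) (hj : j < k) (h : i + 1 = j) :
    G.Adj (v i) (v j) :=
  h ▸ hv.adj i (h ▸ hj)

theorem reverse (hv : G.IsPathOn v k) : G.IsPathOn (v ∘ (k - 1 - ·)) k where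
  injOn := hv.injOn.comp (fun a (ha : a < k) b (hb : b < k) (h : k - 1 - a = k - 1 - b) => by
    omega) fun m (hm : m < k) => show k - 1 - m < k by omega
  adj i hi := show G.Adj (v (k - 1 - i)) (v (k - 1 - (i + 1))) from
    (hv.adj_of_add_one_eq (by omega) (by omega)).symm

theorem rotate (hv : G.IsPathOn v k) (hi : i + 1 < k) (h₀ : G.Adj (v 0) (v (i + 1))) :
    G.IsPathOn (v ∘ fun m => if m ≤ i then i - m else m) k where
  injOn := hv.injOn.comp (fun a (ha : a < k) b (hb : b < k) h => by
    split_ifs at h <;> omega) fun m (hm : m < k) => by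
    simp only [Set.mem_Iio]; split_ifs <;> omega
  adj m hm := by
    simp only [Function.comp_apply]
    split_ifs with h₁ h₂ h₂
    · exact (hv.adj_of_add_one_eq (by omega) (by omega)).symm
    · convert h₀ using 2 <;> omega
    · omega
    · exact hv.adj_of_add_one_eq hm rfl

theorem isCycleOn_of_crossing (hv : G.IsPathOn v k) (hj : j + 2 ≤ k)
    (h₀ : G.Adj (v 0) (v (j + 1))) (h₁ : G.Adj (v (k - 1)) (v j)) :
    G.IsCycleOn (v ∘ fun m => if m ≤ j then m else k + j - m) k where
  injOn := hv.injOn.comp (fun a (ha : a < k) b (hb : b < k) h => by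
    split_ifs at h <;> omega) fun m (hm : m < k) => by
    simp only [Set.mem_Iio]; split_ifs <;> omega
  adj m hm := by
    simp only [Function.comp_apply]
    split_ifs with h₂ h₃ h₃
    · exact hv.adj_of_add_one_eq (by omega) rfl
    · convert h₁.symm using 2 <;> omega
    · omega
    · exact (hv.adj_of_add_one_eq (by omega) (by omega)).symm
  adj_last := by
    simp only [Function.comp_apply, if_pos (Nat.zero_le j), if_neg (show ¬ k - 1 ≤ j by omega)]
    convert h₀.symm using 2
    omega

theorem cons {x : V} (hv : G.IsPathOn v k) (hx : ∀ m < k, v m ≠ x) (h₀ : G.Adj x (v 0)) :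
    G.IsPathOn (fun m => if m = 0 then x else v (m - 1)) (k + 1) where
  injOn a (ha : a < k + 1) b (hb : b < k + 1) h := by
    simp only at h
    split_ifs at h with h₁ h₂ h₂
    · omega
    · exact absurd h.symm (hx _ (by omega))
    · exact absurd h (hx _ (by omega))
    · have := hv.injOn (show a - 1 < k by omega) (show b - 1 < k by omega) h
      omega
  adj m hm := by
    simp only [Nat.add_eq_zero_iff, one_ne_zero, and_false, if_false, Nat.add_sub_cancel]
    split_ifs with h₁
    · exact h₁ ▸ h₀
    · exact hv.adj_of_add_one_eq (by omega) (by omega)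

theorem exists_eq_of_adj_head (hv : G.IsPathOn v k) (hmax : ∀ u, ¬ G.IsPathOn u (k + 1))
    {x : V} (hx : G.Adj (v 0) x) : ∃ m < k, v m = x := by
  by_contra! h
  exact hmax _ (hv.cons h hx.symm)

end IsPathOn

theorem IsCycleOn.rotate {w : ℕ → V} {k j : ℕ} (hw : G.IsCycleOn w k) (hj : j < k) :
    G.IsPathOn (w ∘ fun m => if j + m < k then j + m else j + m - k) k where
  injOn := hw.injOn.comp (fun a (ha : a < k) b (hb : b < k) h => by
    split_ifs at h <;> omega) fun m (hm : m < k) => by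
    simp only [Set.mem_Iio]; split_ifs <;> omega
  adj m hm := by
    simp only [Function.comp_apply]
    split_ifs with h₁ h₂ h₂
    · exact hw.adj_of_add_one_eq h₂ (by omega)
    · convert hw.adj_last using 2 <;> omega
    · omega
    · exact hw.adj_of_add_one_eq (by omega) (by omega)

section Fintype

variable [Fintype V] {v : ℕ → V}

theorem IsCycleOn.isHamiltonian (hv : G.IsCycleOn v (Fintype.card V))
    (h3 : 3 ≤ Fintype.card V) : G.IsHamiltonian := by
  set n := Fintype.card V
  have hadj : ∀ a b : Fin n, (a - b).val = 1 → G.Adj (v a) (v b) := by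
    intro a b hab
    rcases le_or_gt b a with hba | hab'
    · rw [Fin.sub_val_of_le hba] at hab
      exact (hv.adj_of_add_one_eq a.2 (by omega)).symm
    · rw [Fin.coe_sub_iff_lt.mpr hab'] at hab
      rw [show a.val = 0 by omega, show b.val = n - 1 by omega]
      exact hv.adj_last.symm
  have hcopy : cycleGraph n ⊑ G :=
    ⟨Hom.toCopy ⟨fun a => v a, fun {a b} h => (cycleGraph_adj'.mp h).elim (hadj a b)
      fun h' => (hadj b a h').symm⟩ fun a b h => Fin.ext (hv.injOn a.2 b.2 h)⟩
  obtain ⟨a, p, hp, hlen⟩ := (cycleGraph_isContained_iff h3).mp hcopy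
  exact fun _ => ⟨a, p, Walk.isHamiltonianCycle_iff_isCycle_and_length_eq.mpr ⟨hp, hlen⟩⟩

theorem IsPathOn.le_card {k : ℕ} (hv : G.IsPathOn v k) : k ≤ Fintype.card V := by
  simpa using card_le_card_of_injOn v (fun _ _ => mem_univ _) (s := range k)
    (by simpa using hv.injOn)

theorem IsPathOn.exists_eq (hv : G.IsPathOn v (Fintype.card V)) (x : V) :
    ∃ m < Fintype.card V, v m = x := by
  by_contra! h
  have := card_le_card_of_injOn v (s := range (Fintype.card V)) (t := univ.erase x)
    (fun m hm => by simpa using h m (by simpa using hm)) (by simpa using hv.injOn)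
  rw [card_range, card_erase_of_mem (mem_univ x), card_univ] at this
  have : 0 < Fintype.card V := Fintype.card_pos_iff.mpr ⟨x⟩
  omega

theorem IsPathOn.bijOn (hv : G.IsPathOn v (Fintype.card V)) :
    Set.BijOn v (Set.Iio (Fintype.card V)) Set.univ :=
  ⟨Set.mapsTo_univ _ _, hv.injOn, fun x _ => hv.exists_eq x⟩

theorem IsPathOn.not_adj_last_of_adj_head (hG : ¬ G.IsHamiltonian) (h3 : 3 ≤ Fintype.card V)
    (hv : G.IsPathOn v (Fintype.card V)) {j : ℕ} (hj : j + 2 ≤ Fintype.card V)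
    (h₀ : G.Adj (v 0) (v (j + 1))) : ¬ G.Adj (v (Fintype.card V - 1)) (v j) :=
  fun h₁ => hG ((hv.isCycleOn_of_crossing hj h₀ h₁).isHamiltonian h3)

variable (G) in
theorem exists_isPathOn_forall_not_isPathOn_succ [Nonempty V] :
    ∃ v k, G.IsPathOn v k ∧ ∀ u, ¬ G.IsPathOn u (k + 1) := by
  let P k := ∃ v, G.IsPathOn v k
  have hP₀ : P 0 := ⟨fun _ => Classical.arbitrary V, fun _ h => absurd h (Nat.not_lt_zero _),
    fun _ h => absurd h (Nat.not_lt_zero _)⟩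
  obtain ⟨v, hv⟩ : P (Nat.findGreatest P (Fintype.card V)) :=
    Nat.findGreatest_spec (Nat.zero_le _) hP₀
  refine ⟨v, _, hv, fun u hu => ?_⟩
  have := Nat.le_findGreatest (P := P) hu.le_card ⟨u, hu⟩
  omega

end Fintype

section Chords

variable [DecidableRel G.Adj] {v : ℕ → V} {k : ℕ}

/- An index `i` in both sets is a crossing pair `v 0 ~ v (i + 1)`, `v (k - 1) ~ v i`, which closes
the cycle `v 0, …, v i, v (k - 1), …, v (i + 1)` (`IsPathOn.isCycleOn_of_crossing`). -/
variable (G) in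
def headChords (v : ℕ → V) (k : ℕ) : Finset ℕ :=
  (range (k - 1)).filter fun i => G.Adj (v 0) (v (i + 1))

variable (G) in
def lastChords (v : ℕ → V) (k : ℕ) : Finset ℕ :=
  (range (k - 1)).filter fun i => G.Adj (v (k - 1)) (v i)

theorem mem_headChords {i : ℕ} :
    i ∈ G.headChords v k ↔ i + 1 < k ∧ G.Adj (v 0) (v (i + 1)) := by
  simp only [headChords, mem_filter, mem_range, Nat.lt_sub_iff_add_lt]

theorem disjoint_headChords_lastChords
    (h : ∀ j, j + 2 ≤ k → G.Adj (v 0) (v (j + 1)) → ¬ G.Adj (v (k - 1)) (v j)) :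
    Disjoint (G.headChords v k) (G.lastChords v k) := by
  refine Finset.disjoint_left.mpr fun j hj hl => ?_
  simp only [headChords, lastChords, mem_filter, mem_range] at hj hl
  exact h j (by omega) hj.2 hl.2

variable [Fintype V]

theorem card_filter_adj_eq_degree {a : V} (hv : Set.InjOn v (Set.Iio k))
    (hN : ∀ x, G.Adj a x → ∃ m < k, v m = x) :
    ((range k).filter fun m => G.Adj a (v m)).card = G.degree a := by
  rw [← card_neighborFinset_eq_degree, ← card_image_of_injOn (f := v)
    (hv.mono fun m hm => mem_range.mp (mem_filter.mp hm).1)]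
  congr 1
  ext x
  simp only [mem_image, mem_filter, mem_range, mem_neighborFinset]
  constructor
  · rintro ⟨m, ⟨-, h⟩, rfl⟩
    exact h
  · intro h
    obtain ⟨m, hm, rfl⟩ := hN x h
    exact ⟨m, ⟨hm, h⟩, rfl⟩

namespace IsPathOn

theorem card_headChords (hv : G.IsPathOn v k) (hN : ∀ x, G.Adj (v 0) x → ∃ m < k, v m = x) :
    (G.headChords v k).card = G.degree (v 0) := by
  refine card_filter_adj_eq_degree (v := v ∘ (· + 1))
    (hv.injOn.comp (fun a _ b _ h => by simpa using h) fun m (hm : m < k - 1) =>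
      show m + 1 < k by omega) fun x hx => ?_
  obtain ⟨m, hm, rfl⟩ := hN x hx
  have : m ≠ 0 := by rintro rfl; exact G.irrefl hx
  exact ⟨m - 1, by omega, by simp only [Function.comp_apply]; congr 1; omega⟩

theorem card_lastChords (hv : G.IsPathOn v k)
    (hN : ∀ x, G.Adj (v (k - 1)) x → ∃ m < k, v m = x) :
    (G.lastChords v k).card = G.degree (v (k - 1)) := by
  refine card_filter_adj_eq_degree (hv.injOn.mono fun m (hm : m < k - 1) =>
    show m < k by omega) fun x hx => ?_
  obtain ⟨m, hm, rfl⟩ := hN x hx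
  have : m ≠ k - 1 := by rintro rfl; exact G.irrefl hx
  exact ⟨m, by omega, rfl⟩

theorem degree_add_degree_le (hv : G.IsPathOn v k)
    (hN₀ : ∀ x, G.Adj (v 0) x → ∃ m < k, v m = x)
    (hN₁ : ∀ x, G.Adj (v (k - 1)) x → ∃ m < k, v m = x)
    (h : ∀ j, j + 2 ≤ k → G.Adj (v 0) (v (j + 1)) → ¬ G.Adj (v (k - 1)) (v j)) :
    G.degree (v 0) + G.degree (v (k - 1)) ≤ k - 1 := by
  rw [← hv.card_headChords hN₀, ← hv.card_lastChords hN₁,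
    ← card_union_of_disjoint (disjoint_headChords_lastChords h)]
  exact (card_le_card (union_subset (filter_subset _ _) (filter_subset _ _))).trans_eq
    (card_range _)

end IsPathOn

variable (G) in
theorem exists_adj_of_card_lt {x : V} (hv : Set.InjOn v (Set.Iio k)) (hx : ∀ m < k, v m ≠ x)
    (hk : Fintype.card V < k + G.minDegree + 1) : ∃ m < k, G.Adj x (v m) := by
  by_contra! h
  have hsub : G.neighborFinset x ⊆ univ \ insert x ((range k).image v) := by
    intro y hy
    rw [mem_neighborFinset] at hy
    simp only [mem_sdiff, mem_univ, mem_insert, mem_image, mem_range, true_and, not_or,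
      not_exists, not_and]
    exact ⟨(G.ne_of_adj hy).symm, fun m hm hmy => h m hm (hmy ▸ hy)⟩
  have hs : (insert x ((range k).image v)).card = k + 1 := by
    rw [card_insert_of_notMem (by simpa using hx), card_image_of_injOn (by simpa using hv),
      card_range]
  have hcard := card_le_card hsub
  rw [card_neighborFinset_eq_degree, card_sdiff_of_subset (subset_univ _), card_univ, hs] at hcard
  have := card_le_univ (insert x ((range k).image v))
  have := G.minDegree_le_degree x
  omega

theorem IsPathOn.exists_isPathOn_add_one (hv : G.IsPathOn v k) (hk₀ : 0 < k)
    (hk : k < Fintype.card V) (hδ : Fintype.card V ≤ 2 * G.minDegree + 1)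
    (hN₀ : ∀ x, G.Adj (v 0) x → ∃ m < k, v m = x)
    (hN₁ : ∀ x, G.Adj (v (k - 1)) x → ∃ m < k, v m = x) : ∃ u, G.IsPathOn u (k + 1) := by
  obtain ⟨j, hj, h₀, h₁⟩ : ∃ j, j + 2 ≤ k ∧ G.Adj (v 0) (v (j + 1)) ∧
      G.Adj (v (k - 1)) (v j) := by
    by_contra! h
    have := hv.degree_add_degree_le hN₀ hN₁ h
    have := G.minDegree_le_degree (v 0)
    have := G.minDegree_le_degree (v (k - 1))
    omega
  have hδk : G.minDegree ≤ k - 1 :=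
    (G.minDegree_le_degree _).trans <| hv.card_headChords hN₀ ▸
      (card_filter_le _ _).trans_eq (card_range _)
  obtain ⟨x, hx⟩ : ∃ x, ∀ m < k, v m ≠ x := by
    by_contra! h
    have : Fintype.card V ≤ k := by
      simpa using card_le_card_of_surjOn v (s := range k) (t := univ)
        fun x _ => by simpa using h x
    omega
  have hc := hv.isCycleOn_of_crossing hj h₀ h₁
  have hcx : ∀ m < k, (v ∘ fun m => if m ≤ j then m else k + j - m) m ≠ x := fun m hm =>
    hx _ (by dsimp only; split_ifs <;> omega)
  -- the cycle has `k > δ` vertices, more than an outside vertex can avoid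
  obtain ⟨m, hm, hxm⟩ := G.exists_adj_of_card_lt hc.injOn hcx (by omega)
  refine ⟨_, (hc.rotate hm).cons (fun i hi => hcx _ (by dsimp only; split_ifs <;> omega)) ?_⟩
  simpa [hm] using hxm

variable (G) in
theorem exists_isPathOn_card [Nonempty V] (hδ : Fintype.card V ≤ 2 * G.minDegree + 1) :
    ∃ v, G.IsPathOn v (Fintype.card V) := by
  obtain ⟨v, k, hv, hmax⟩ := G.exists_isPathOn_forall_not_isPathOn_succ
  have hk : 0 < k := by
    by_contra hk
    refine hmax (fun _ => v 0) ⟨fun a (ha : a < k + 1) b (hb : b < k + 1) _ => by omega,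
      fun i hi => by omega⟩
  have hN₀ (x) (hx : G.Adj (v 0) x) : ∃ m < k, v m = x := hv.exists_eq_of_adj_head hmax hx
  have hN₁ (x) (hx : G.Adj (v (k - 1)) x) : ∃ m < k, v m = x := by
    obtain ⟨m, hm, rfl⟩ := hv.reverse.exists_eq_of_adj_head hmax (x := x) (by simpa using hx)
    exact ⟨k - 1 - m, by omega, rfl⟩
  refine ⟨v, (hv.le_card.lt_or_eq.resolve_left fun hlt => ?_) ▸ hv⟩
  obtain ⟨u, hu⟩ := hv.exists_isPathOn_add_one hk hlt hδ hN₀ hN₁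
  exact hmax u hu

end Chords

section Witnesses

variable {v : ℕ → V}

theorem exists_independent_join_of_adj_iff_odd {r : ℕ}
    (hv : Set.BijOn v (Set.Iio (2 * r + 1)) Set.univ)
    (h : ∀ a < 2 * r + 1, Even a → ∀ b < 2 * r + 1, (G.Adj (v a) (v b) ↔ Odd b)) :
    ∃ X : Finset V, X.card = r + 1 ∧ (∀ x ∈ X, ∀ y ∈ X, ¬ G.Adj x y) ∧
      (∀ x ∈ X, ∀ y, y ∉ X → G.Adj x y) := by
  set E := (range (r + 1)).image (2 * ·)
  have hE : ∀ t ∈ E, t < 2 * r + 1 := fun t ht => by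
    rw [mem_image_two_mul_range, Nat.even_iff] at ht
    omega
  have hmem {m : ℕ} (hm : m < 2 * r + 1) : v m ∈ E.image v ↔ Even m := by
    rw [← mem_coe, coe_image, hv.injOn.mem_image_iff (fun t ht => hE t ht) hm, mem_coe,
      mem_image_two_mul_range]
    exact ⟨And.left, fun h => ⟨h, by omega⟩⟩
  refine ⟨E.image v, ?_, fun x hx y hy => ?_, fun x hx y hy => ?_⟩
  · rw [card_image_of_injOn (hv.injOn.mono fun t ht => hE t ht),
      card_image_of_injective _ (mul_right_injective₀ two_ne_zero), card_range]
  · obtain ⟨a, ha, rfl⟩ := mem_image.mp hx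
    obtain ⟨b, hb, rfl⟩ := mem_image.mp hy
    rw [h a (hE a ha) ((hmem (hE a ha)).mp hx) b (hE b hb), Nat.not_odd_iff_even]
    exact (hmem (hE b hb)).mp hy
  · obtain ⟨a, ha, rfl⟩ := mem_image.mp hx
    obtain ⟨b, hb, rfl⟩ := hv.surjOn (Set.mem_univ y)
    rw [h a (hE a ha) ((hmem (hE a ha)).mp hx) b hb, ← Nat.not_even_iff_odd, ← hmem hb]
    exact hy

theorem exists_two_cliques_join_of_adj_iff [Fintype V] {r : ℕ}
    (hv : Set.BijOn v (Set.Iio (2 * r + 1)) Set.univ)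
    (h : ∀ a < 2 * r + 1, ∀ b < 2 * r + 1, G.Adj (v a) (v b) ↔
      a ≠ b ∧ (a = r ∨ b = r ∨ (a < r ∧ b < r) ∨ (r < a ∧ r < b))) :
    ∃ (x : V) (A B : Finset V), Disjoint A B ∧ x ∉ A ∧ x ∉ B ∧ A ∪ B = univ \ {x} ∧
      A.card = r ∧ B.card = r ∧
      ∀ u w : V, G.Adj u w ↔ u ≠ w ∧ (u = x ∨ w = x ∨ (u ∈ A ∧ w ∈ A) ∨ (u ∈ B ∧ w ∈ B)) := by
  have hA : ∀ t ∈ range r, t < 2 * r + 1 := fun t ht => by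
    rw [mem_range] at ht
    omega
  have hB : ∀ t ∈ Ioo r (2 * r + 1), t < 2 * r + 1 := fun t ht => (mem_Ioo.mp ht).2
  have hsurj (y : V) : ∃ m < 2 * r + 1, v m = y := hv.surjOn (Set.mem_univ y)
  have heq {a b : ℕ} (ha : a < 2 * r + 1) (hb : b < 2 * r + 1) : v a = v b ↔ a = b :=
    hv.injOn.eq_iff ha hb
  have memA {m : ℕ} (hm : m < 2 * r + 1) : v m ∈ (range r).image v ↔ m < r := by
    rw [← mem_coe, coe_image, hv.injOn.mem_image_iff (fun t ht => hA t ht) hm, mem_coe,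
      mem_range]
  have memB {m : ℕ} (hm : m < 2 * r + 1) : v m ∈ (Ioo r (2 * r + 1)).image v ↔ r < m := by
    rw [← mem_coe, coe_image, hv.injOn.mem_image_iff (fun t ht => hB t ht) hm, mem_coe,
      mem_Ioo]
    omega
  refine ⟨v r, (range r).image v, (Ioo r (2 * r + 1)).image v, ?_, ?_, ?_, ?_, ?_, ?_,
    fun u w => ?_⟩
  · refine Finset.disjoint_left.mpr fun y hyA hyB => ?_
    obtain ⟨m, hm, rfl⟩ := hsurj y
    rw [memA hm] at hyA
    rw [memB hm] at hyB
    omega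
  · rw [memA (by omega)]
    omega
  · rw [memB (by omega)]
    omega
  · ext y
    obtain ⟨m, hm, rfl⟩ := hsurj y
    rw [mem_union, memA hm, memB hm, mem_sdiff, mem_singleton, heq hm (by omega)]
    simp only [mem_univ, true_and]
    omega
  · rw [card_image_of_injOn (hv.injOn.mono fun t ht => hA t ht), card_range]
  · rw [card_image_of_injOn (hv.injOn.mono fun t ht => hB t ht), Nat.card_Ioo]
    omega
  · obtain ⟨a, ha, rfl⟩ := hsurj u
    obtain ⟨b, hb, rfl⟩ := hsurj w
    simp only [h a ha b hb, memA ha, memA hb, memB ha, memB hb, ne_eq, heq ha hb,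
      heq ha (show r < 2 * r + 1 by omega), heq hb (show r < 2 * r + 1 by omega)]

end Witnesses

section NearDirac

variable [Fintype V] [DecidableRel G.Adj] {v : ℕ → V}

-- `card_le` is `δ(G) ≥ (n - 1) / 2`, just below Dirac's condition `δ(G) ≥ n / 2`.
variable (G) in
structure IsNearDiracNonHamiltonian : Prop where
  not_isHamiltonian : ¬ G.IsHamiltonian
  three_le_card : 3 ≤ Fintype.card V
  card_le : Fintype.card V ≤ 2 * G.minDegree + 1

namespace IsPathOn

theorem card_eq_two_mul_minDegree_add_one (hG : G.IsNearDiracNonHamiltonian)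
    (hv : G.IsPathOn v (Fintype.card V)) :
    Fintype.card V = 2 * G.minDegree + 1 := by
  have := hv.degree_add_degree_le (fun x _ => hv.exists_eq x) (fun x _ => hv.exists_eq x)
    fun _ hj h₀ => hv.not_adj_last_of_adj_head hG.not_isHamiltonian hG.three_le_card hj h₀
  have := G.minDegree_le_degree (v 0)
  have := G.minDegree_le_degree (v (Fintype.card V - 1))
  have := hG.card_le
  have := hG.three_le_card
  omega

theorem card_headChords_eq_minDegree (hG : G.IsNearDiracNonHamiltonian)
    (hv : G.IsPathOn v (Fintype.card V)) :
    (G.headChords v (Fintype.card V)).card = G.minDegree := by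
  have := hv.degree_add_degree_le (fun x _ => hv.exists_eq x) (fun x _ => hv.exists_eq x)
    fun _ hj h₀ => hv.not_adj_last_of_adj_head hG.not_isHamiltonian hG.three_le_card hj h₀
  have := hv.card_headChords fun x _ => hv.exists_eq x
  have := G.minDegree_le_degree (v 0)
  have := G.minDegree_le_degree (v (Fintype.card V - 1))
  have := hG.card_le
  omega

theorem adj_last_iff (hG : G.IsNearDiracNonHamiltonian)
    (hv : G.IsPathOn v (Fintype.card V)) {j : ℕ}
    (hj : j + 2 ≤ Fintype.card V) :
    G.Adj (v (Fintype.card V - 1)) (v j) ↔ ¬ G.Adj (v 0) (v (j + 1)) := by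
  have hcross (j) := hv.not_adj_last_of_adj_head hG.not_isHamiltonian hG.three_le_card (j := j)
  refine ⟨fun h₁ h₀ => hcross j hj h₀ h₁, fun h₀ => ?_⟩
  by_contra h₁
  have hsub : G.headChords v (Fintype.card V) ∪ G.lastChords v (Fintype.card V) ⊆
      (range (Fintype.card V - 1)).erase j := by
    intro i hi
    simp only [mem_union, headChords, lastChords, mem_filter, mem_range] at hi
    rw [mem_erase, mem_range]
    refine ⟨?_, by omega⟩
    rintro rfl
    exact hi.elim (h₀ ·.2) (h₁ ·.2)
  have hcard := card_le_card hsub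
  rw [card_union_of_disjoint (disjoint_headChords_lastChords hcross),
    hv.card_headChords fun x _ => hv.exists_eq x, hv.card_lastChords fun x _ => hv.exists_eq x,
    card_erase_of_mem (mem_range.mpr (by omega)), card_range] at hcard
  have := G.minDegree_le_degree (v 0)
  have := G.minDegree_le_degree (v (Fintype.card V - 1))
  have := hG.card_le
  omega

theorem adj_iff_mem_headChords (hG : G.IsNearDiracNonHamiltonian)
    (hv : G.IsPathOn v (Fintype.card V)) {i l : ℕ}
    (hi : i ∈ G.headChords v (Fintype.card V)) (hl : l < Fintype.card V) (hli : l ≠ i) :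
    G.Adj (v i) (v l) ↔ (if l < i then l + 1 else l - 1) ∈ G.headChords v (Fintype.card V) := by
  have hi' := mem_headChords.mp hi
  -- compare `adj_last_iff` for `v` and for its rotation `hu`, which starts at `v i`
  have hu := hv.rotate hi'.1 hi'.2
  rcases (by omega : l + 1 = i ∨ l = i + 1 ∨ l + 2 ≤ i ∨ i + 2 ≤ l) with h | h | h | h
  · rw [if_pos (by omega), h]
    exact iff_of_true (hv.adj_of_add_one_eq (by omega) h).symm hi
  · rw [if_neg (by omega), h, Nat.add_sub_cancel]
    exact iff_of_true (hv.adj_of_add_one_eq (by omega) rfl) hi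
  · have h₁ := hu.adj_last_iff hG (j := i - l - 1) (by omega)
    simp only [Function.comp_apply, if_neg (show ¬ Fintype.card V - 1 ≤ i by omega),
      if_pos (show i - l - 1 ≤ i by omega), if_pos (show i - l - 1 + 1 ≤ i by omega),
      if_pos (Nat.zero_le i), Nat.sub_zero, show i - (i - l - 1) = l + 1 by omega,
      show i - (i - l - 1 + 1) = l by omega] at h₁
    rw [if_pos (by omega), mem_headChords, ← not_iff_not, ← h₁, hv.adj_last_iff hG (by omega)]
    simp only [show l + 1 + 1 < Fintype.card V by omega, true_and]
  · have h₁ := hu.adj_last_iff hG (j := l - 1) (by omega)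
    simp only [Function.comp_apply, if_neg (show ¬ Fintype.card V - 1 ≤ i by omega),
      if_neg (show ¬ l - 1 ≤ i by omega), if_neg (show ¬ l ≤ i by omega),
      if_pos (Nat.zero_le i), Nat.sub_zero, Nat.sub_add_cancel (show 1 ≤ l by omega)] at h₁
    rw [if_neg (by omega), mem_headChords, ← not_iff_not, ← h₁, hv.adj_last_iff hG (by omega),
      Nat.sub_add_cancel (by omega)]
    simp only [show l < Fintype.card V by omega, true_and]

theorem sub_two_notMem_headChords (hG : ¬ G.IsHamiltonian) (h3 : 3 ≤ Fintype.card V)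
    (hv : G.IsPathOn v (Fintype.card V)) :
    Fintype.card V - 2 ∉ G.headChords v (Fintype.card V) := fun h =>
  hv.not_adj_last_of_adj_head hG h3 (by omega) (mem_headChords.mp h).2
    (hv.adj_of_add_one_eq (by omega) (by omega)).symm

theorem mem_headChords_of_add_one_of_add_two (hG : G.IsNearDiracNonHamiltonian)
    (hv : G.IsPathOn v (Fintype.card V)) {m : ℕ}
    (h₁ : m + 1 ∈ G.headChords v (Fintype.card V))
    (h₂ : m + 2 ∈ G.headChords v (Fintype.card V)) : m ∈ G.headChords v (Fintype.card V) := by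
  by_contra hm
  have hm₄ : m + 4 ≤ Fintype.card V := by
    have := mem_headChords.mp h₂
    have : m + 2 ≠ Fintype.card V - 2 := fun h =>
      hv.sub_two_notMem_headChords hG.not_isHamiltonian hG.three_le_card (h ▸ h₂)
    omega
  have e₁ : G.Adj (v (m + 1)) (v (m + 3)) :=
    (hv.adj_iff_mem_headChords hG h₁ (by omega) (by omega)).mpr (by rwa [if_neg (by omega)])
  have e₂ : G.Adj (v (Fintype.card V - 1)) (v m) :=
    (hv.adj_last_iff hG (by omega)).mpr fun h => hm (mem_headChords.mpr ⟨by omega, h⟩)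
  -- `v (m + 1), …, v (n - 1), v m, …, v 0` is a Hamilton path on which `e₁` and
  -- `v 0 ~ v (m + 2)` cross
  have hu := hv.reverse.rotate (i := Fintype.card V - 2 - m) (by omega) (by
    simp only [Function.comp_apply, Nat.sub_zero]
    convert e₂ using 2
    omega)
  refine hu.not_adj_last_of_adj_head hG.not_isHamiltonian hG.three_le_card (j := 1) (by omega)
    ?_ ?_
  · simp only [Function.comp_apply]
    convert e₁ using 2 <;> split_ifs <;> omega
  · simp only [Function.comp_apply]
    convert (mem_headChords.mp h₁).2 using 2 <;> split_ifs <;> omega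

theorem mem_headChords_of_pair_of_add_one (hG : G.IsNearDiracNonHamiltonian)
    (hv : G.IsPathOn v (Fintype.card V)) {p q : ℕ}
    (hp : p ∈ G.headChords v (Fintype.card V)) (hp₁ : p + 1 ∈ G.headChords v (Fintype.card V))
    (hpq : p + 2 ≤ q) (hq₁ : q + 1 ∈ G.headChords v (Fintype.card V)) :
    q ∈ G.headChords v (Fintype.card V) := by
  have hqn := (mem_headChords.mp hq₁).1
  -- the rotations at `q + 1` and at `p` disagree about the edge `v p v (q + 1)`
  have e := (hv.adj_iff_mem_headChords hG hq₁ (l := p) (by omega) (by omega)).mpr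
    (by rwa [if_pos (by omega)])
  simpa [if_neg (show ¬ q + 1 < p by omega)] using
    (hv.adj_iff_mem_headChords hG hp (l := q + 1) (by omega) (by omega)).mp e.symm

theorem headChords_eq_range_or_image (hG : G.IsNearDiracNonHamiltonian)
    (hv : G.IsPathOn v (Fintype.card V)) :
    G.headChords v (Fintype.card V) = range G.minDegree ∨
      G.headChords v (Fintype.card V) = (range G.minDegree).image (2 * ·) := by
  have hcard := hv.card_headChords_eq_minDegree hG
  have hn := hv.card_eq_two_mul_minDegree_add_one hG
  rw [← hcard]
  by_cases hgap :
      ∃ q, q ∉ G.headChords v (Fintype.card V) ∧ q + 1 ∈ G.headChords v (Fintype.card V)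
  · obtain ⟨q, hq, hq₁⟩ := hgap
    refine Or.inr (eq_image_two_mul_range_of_add_one_notMem (fun x hx => ?_) fun p hp hp₁ => ?_)
    · have := (mem_headChords.mp hx).1
      have : x ≠ Fintype.card V - 2 := fun h =>
        hv.sub_two_notMem_headChords hG.not_isHamiltonian hG.three_le_card (h ▸ hx)
      omega
    · rcases Nat.add_two_le_or_exists_gap_pair hq hp hp₁ with h | ⟨m, hm, hm₁, hm₂⟩
      · exact hq (hv.mem_headChords_of_pair_of_add_one hG hp hp₁ h hq₁)
      · exact hm (hv.mem_headChords_of_add_one_of_add_two hG hm₁ hm₂)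
  · push Not at hgap
    exact Or.inl (eq_range_card_of_add_one_mem fun q hq => by_contra fun h => hgap q h hq)

theorem adj_iff_of_headChords_eq_range_of_lt (hG : G.IsNearDiracNonHamiltonian)
    (hv : G.IsPathOn v (Fintype.card V)) (hS : G.headChords v (Fintype.card V) = range G.minDegree)
    {a b : ℕ} (ha : a < G.minDegree) (hb : b < Fintype.card V) :
    G.Adj (v a) (v b) ↔ b ≠ a ∧ b ≤ G.minDegree := by
  by_cases hba : b = a
  · simp [hba]
  rw [hv.adj_iff_mem_headChords hG (by rw [hS]; exact mem_range.mpr ha) hb hba, hS,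
    mem_range]
  split_ifs <;> omega

theorem headChords_reverse_eq_range (hG : G.IsNearDiracNonHamiltonian)
    (hv : G.IsPathOn v (Fintype.card V))
    (hS : G.headChords v (Fintype.card V) = range G.minDegree) :
    G.headChords (v ∘ (Fintype.card V - 1 - ·)) (Fintype.card V) = range G.minDegree := by
  have hn := hv.card_eq_two_mul_minDegree_add_one hG
  ext i
  simp only [mem_headChords, Function.comp_apply, Nat.sub_zero, mem_range]
  refine ⟨fun ⟨hi, h⟩ => ?_, fun hi => ⟨by omega, ?_⟩⟩
  · rw [show Fintype.card V - 1 - (i + 1) = Fintype.card V - 2 - i by omega,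
      hv.adj_last_iff hG (by omega)] at h
    have : Fintype.card V - 2 - i ∉ range G.minDegree := hS ▸ fun hm => h (mem_headChords.mp hm).2
    rw [mem_range] at this
    omega
  · rw [show Fintype.card V - 1 - (i + 1) = Fintype.card V - 2 - i by omega,
      hv.adj_last_iff hG (by omega)]
    intro h
    have : Fintype.card V - 2 - i ∈ range G.minDegree := hS ▸ mem_headChords.mpr ⟨by omega, h⟩
    rw [mem_range] at this
    omega

theorem adj_iff_of_headChords_eq_range (hG : G.IsNearDiracNonHamiltonian)
    (hv : G.IsPathOn v (Fintype.card V))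
    (hS : G.headChords v (Fintype.card V) = range G.minDegree) {a b : ℕ}
    (ha : a < Fintype.card V) (hb : b < Fintype.card V) :
    G.Adj (v a) (v b) ↔ a ≠ b ∧ (a = G.minDegree ∨ b = G.minDegree ∨
      (a < G.minDegree ∧ b < G.minDegree) ∨ (G.minDegree < a ∧ G.minDegree < b)) := by
  have hn := hv.card_eq_two_mul_minDegree_add_one hG
  have low := fun {a b} => hv.adj_iff_of_headChords_eq_range_of_lt hG hS (a := a) (b := b)
  have high {a b : ℕ} (ha : G.minDegree < a) (ha' : a < Fintype.card V)
      (hb : b < Fintype.card V) : G.Adj (v a) (v b) ↔ b ≠ a ∧ G.minDegree ≤ b := by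
    have := hv.reverse.adj_iff_of_headChords_eq_range_of_lt hG
      (hv.headChords_reverse_eq_range hG hS) (a := Fintype.card V - 1 - a)
      (b := Fintype.card V - 1 - b) (by omega) (by omega)
    simp only [Function.comp_apply, Nat.sub_sub_self (show a ≤ Fintype.card V - 1 by omega),
      Nat.sub_sub_self (show b ≤ Fintype.card V - 1 by omega)] at this
    rw [this]
    omega
  rcases lt_trichotomy a G.minDegree with h | rfl | h
  · rw [low h hb]
    omega
  · rcases lt_trichotomy b G.minDegree with h' | rfl | h'
    · rw [G.adj_comm, low h' ha]
      omega
    · simp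
    · rw [G.adj_comm, high h' hb ha]
      omega
  · rw [high h ha hb]
    omega

theorem adj_iff_odd_of_headChords_eq_image (hG : G.IsNearDiracNonHamiltonian)
    (hv : G.IsPathOn v (Fintype.card V))
    (hS : G.headChords v (Fintype.card V) = (range G.minDegree).image (2 * ·)) {a b : ℕ}
    (ha : a < Fintype.card V) (ha₂ : Even a) (hb : b < Fintype.card V) :
    G.Adj (v a) (v b) ↔ Odd b := by
  have hn := hv.card_eq_two_mul_minDegree_add_one hG
  rw [Nat.even_iff] at ha₂
  rw [Nat.odd_iff]
  by_cases hba : b = a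
  · subst hba
    simp only [SimpleGraph.irrefl, false_iff]
    omega
  by_cases han : a = Fintype.card V - 1
  · subst han
    rw [hv.adj_last_iff hG (by omega)]
    have : G.Adj (v 0) (v (b + 1)) ↔ b ∈ G.headChords v (Fintype.card V) := by
      simp [mem_headChords, show b + 1 < Fintype.card V by omega]
    rw [this, hS, mem_image_two_mul_range, Nat.even_iff]
    omega
  · rw [hv.adj_iff_mem_headChords hG (by rw [hS, mem_image_two_mul_range, Nat.even_iff]; omega)
      hb hba, hS, mem_image_two_mul_range, Nat.even_iff]
    split_ifs <;> omega

end IsPathOn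

end NearDirac

end SimpleGraph

theorem stmt7 {V : Type*} [Fintype V] (G : SimpleGraph V) [DecidableRel G.Adj]
    (hn : 3 ≤ Fintype.card V)
    (hd : ((Fintype.card V : ℝ) - 1) / 2 ≤ (G.minDegree : ℝ)) :
    G.IsHamiltonian ∨
      (Odd (Fintype.card V) ∧
        ((∃ X : Finset V, X.card = (Fintype.card V + 1) / 2 ∧
          (∀ x ∈ X, ∀ y ∈ X, ¬ G.Adj x y) ∧ (∀ x ∈ X, ∀ y, y ∉ X → G.Adj x y)) ∨
         (∃ (x : V) (A B : Finset V), Disjoint A B ∧ x ∉ A ∧ x ∉ B ∧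
            A ∪ B = Finset.univ \ {x} ∧
            A.card = (Fintype.card V - 1) / 2 ∧ B.card = (Fintype.card V - 1) / 2 ∧
            ∀ u v : V, G.Adj u v ↔
              u ≠ v ∧ (u = x ∨ v = x ∨ (u ∈ A ∧ v ∈ A) ∨ (u ∈ B ∧ v ∈ B))))) := by
  by_cases hG : G.IsHamiltonian
  · exact Or.inl hG
  have hδ : Fintype.card V ≤ 2 * G.minDegree + 1 := by
    have : (Fintype.card V : ℝ) ≤ 2 * G.minDegree + 1 := by linarith
    exact_mod_cast this
  have : Nonempty V := Fintype.card_pos_iff.mp (by omega)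
  obtain ⟨v, hv⟩ := G.exists_isPathOn_card hδ
  have hG' : G.IsNearDiracNonHamiltonian := ⟨hG, hn, hδ⟩
  have hcard := hv.card_eq_two_mul_minDegree_add_one hG'
  have hbij := hv.bijOn
  rw [hcard] at hbij ⊢
  refine Or.inr ⟨odd_two_mul_add_one _, ?_⟩
  rw [show (2 * G.minDegree + 1 + 1) / 2 = G.minDegree + 1 by omega,
    show (2 * G.minDegree + 1 - 1) / 2 = G.minDegree by omega]
  rcases hv.headChords_eq_range_or_image hG' with hS | hS
  · exact Or.inr (SimpleGraph.exists_two_cliques_join_of_adj_iff hbij fun a ha b hb =>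
      hv.adj_iff_of_headChords_eq_range hG' hS (hcard ▸ ha) (hcard ▸ hb))
  · exact Or.inl (SimpleGraph.exists_independent_join_of_adj_iff_odd hbij fun a ha ha₂ b hb =>
      hv.adj_iff_odd_of_headChords_eq_image hG' hS (hcard ▸ ha) ha₂ (hcard ▸ hb))
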